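/- Let D be an integrable real-valued random variable with cumulative distribution function F(x) = P(D ≤ x), and suppose c_o = v + c_h > 0 and c_u = p − v + c_s > 0. Let τ = c_u/(c_o + c_u). Then any τ-quantile of D, i.e. any real number x* such that P(D < x*) ≤ τ and P(D ≤ x*) ≥ τ, maximizes the expected profit: E[π(x*,D)] ≥ E[π(x,D)] for all x ∈ ℝ. -/

import Mathlib

open MeasureTheory

/-- Realized newsvendor profit: selling price `p`, purchase cost `v`,
holding cost `ch`, shortage cost `cs`, order quantity `x`, demand `d`. -/
noncomputable def nvProfit (p v ch cs x d : ℝ) : ℝ :=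
  if d ≤ x then p * d - v * x - ch * (x - d) else p * x - v * x - cs * (d - x)

/-
Writing the profit as `(p - v) d` minus the mismatch cost
`L(x, d) = c_o (x - d)⁺ + c_u (d - x)⁺`, it suffices to show that a `τ`-quantile `x*` minimises
`x ↦ E[L(x, D)]`. For every `d`, both `c_o 1{d ≤ x*} - c_u 1{d > x*}` and
`c_o 1{d < x*} - c_u 1{d ≥ x*}` are subgradients of the convex function `L(·, d)` at `x*`.
Taking expectations, `E[L(x, D)] - E[L(x*, D)]` is at least `(x - x*) ((c_o + c_u) F(x*) - c_u)`
for `x ≥ x*` and at least `(x - x*) ((c_o + c_u) P(D < x*) - c_u)` for `x ≤ x*`, and both bounds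
are nonnegative because `P(D < x*) ≤ τ ≤ F(x*)`.
-/

open Set

noncomputable def nvLoss (co cu x d : ℝ) : ℝ :=
  co * max (x - d) 0 + cu * max (d - x) 0

lemma nvProfit_eq_sub_nvLoss (p v ch cs x d : ℝ) :
    nvProfit p v ch cs x d = (p - v) * d - nvLoss (v + ch) (p - v + cs) x d := by
  unfold nvProfit nvLoss
  split_ifs with h
  · rw [max_eq_left (by linarith), max_eq_right (by linarith)]; ring
  · rw [max_eq_right (by linarith), max_eq_left (by linarith)]; ring

lemma nvLoss_add_mul_indicator_le {co cu y : ℝ} {s : Set ℝ} (hco : 0 ≤ co) (hcu : 0 ≤ cu)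
    (hIio : Iio y ⊆ s) (hIic : s ⊆ Iic y) (x d : ℝ) :
    nvLoss co cu y d + (x - y) * (s.indicator (fun _ ↦ co + cu) d - cu) ≤ nvLoss co cu x d := by
  unfold nvLoss
  have hco_le := mul_le_mul_of_nonneg_left (le_max_left (x - d) 0) hco
  have hcu_le := mul_le_mul_of_nonneg_left (le_max_left (d - x) 0) hcu
  have hco_nonneg := mul_nonneg hco (le_max_right (x - d) 0)
  have hcu_nonneg := mul_nonneg hcu (le_max_right (d - x) 0)
  by_cases hd : d ∈ s
  · have hdy : d ≤ y := hIic hd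
    rw [indicator_of_mem hd, max_eq_left (by linarith), max_eq_right (by linarith)]
    linarith
  · have hyd : y ≤ d := not_lt.1 fun h ↦ hd (hIio h)
    rw [indicator_of_notMem hd, max_eq_right (by linarith), max_eq_left (by linarith)]
    linarith

section Expectation

variable {Ω : Type*} [MeasurableSpace Ω] {μ : Measure Ω} {D : Ω → ℝ}

lemma integrable_nvLoss [IsFiniteMeasure μ] (hD : Integrable D μ) (co cu x : ℝ) :
    Integrable (fun ω ↦ nvLoss co cu x (D ω)) μ :=
  (((integrable_const x).sub hD).pos_part.const_mul co).add
    ((hD.sub (integrable_const x)).pos_part.const_mul cu)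

lemma integral_nvProfit [IsFiniteMeasure μ] (hD : Integrable D μ) (p v ch cs x : ℝ) :
    ∫ ω, nvProfit p v ch cs x (D ω) ∂μ =
      (p - v) * ∫ ω, D ω ∂μ - ∫ ω, nvLoss (v + ch) (p - v + cs) x (D ω) ∂μ := by
  simp_rw [nvProfit_eq_sub_nvLoss]
  rw [integral_sub (hD.const_mul _) (integrable_nvLoss hD _ _ _), integral_const_mul]

lemma integral_nvLoss_add_le [IsProbabilityMeasure μ] {co cu y : ℝ} {s : Set ℝ}
    (hco : 0 ≤ co) (hcu : 0 ≤ cu) (hD : Integrable D μ) (hs : MeasurableSet s)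
    (hIio : Iio y ⊆ s) (hIic : s ⊆ Iic y) (x : ℝ) :
    ∫ ω, nvLoss co cu y (D ω) ∂μ + (x - y) * ((co + cu) * μ.real (D ⁻¹' s) - cu) ≤
      ∫ ω, nvLoss co cu x (D ω) ∂μ := by
  have hDs := hD.aemeasurable.nullMeasurableSet_preimage hs
  have hind : Integrable ((D ⁻¹' s).indicator fun _ ↦ co + cu) μ :=
    (integrable_const _).indicator₀ hDs
  have hsub : Integrable (fun ω ↦ (D ⁻¹' s).indicator (fun _ ↦ co + cu) ω - cu) μ :=
    hind.sub (integrable_const _)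
  have hmean : ∫ ω, ((D ⁻¹' s).indicator (fun _ ↦ co + cu) ω - cu) ∂μ =
      (co + cu) * μ.real (D ⁻¹' s) - cu := by
    rw [integral_sub hind (integrable_const _), integral_indicator₀ hDs, setIntegral_const,
      integral_const, probReal_univ, smul_eq_mul, one_smul, mul_comm]
  rw [← hmean, ← integral_const_mul, ← integral_add (integrable_nvLoss hD _ _ _)
    (hsub.const_mul _)]
  exact integral_mono ((integrable_nvLoss hD _ _ _).add (hsub.const_mul _))
    (integrable_nvLoss hD _ _ _) fun ω ↦ nvLoss_add_mul_indicator_le hco hcu hIio hIic x (D ω)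

end Expectation

theorem quantile_maximizes_expected_nvProfit_general {Ω : Type*} [MeasurableSpace Ω]
    (μ : Measure Ω) [IsProbabilityMeasure μ] (p v ch cs : ℝ)
    (hco : 0 < v + ch) (hcu : 0 < p - v + cs)
    (D : Ω → ℝ) (hD : Integrable D μ)
    (τ : ℝ) (hτ : τ = (p - v + cs) / ((v + ch) + (p - v + cs)))
    (xstar : ℝ)
    (hlow : (μ {ω | D ω < xstar}).toReal ≤ τ)
    (hhigh : τ ≤ (μ {ω | D ω ≤ xstar}).toReal) :
    ∀ x : ℝ,
      (∫ ω, nvProfit p v ch cs x (D ω) ∂μ) ≤ ∫ ω, nvProfit p v ch cs xstar (D ω) ∂μ := by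
  intro x
  rw [integral_nvProfit hD, integral_nvProfit hD]
  set co := v + ch
  set cu := p - v + cs
  suffices ∫ ω, nvLoss co cu xstar (D ω) ∂μ ≤ ∫ ω, nvLoss co cu x (D ω) ∂μ by linarith
  have hsum : 0 ≤ co + cu := by linarith
  have hcu_eq : cu = (co + cu) * τ := by rw [hτ]; field_simp
  rcases le_total xstar x with hx | hx
  · have hF : cu ≤ (co + cu) * μ.real (D ⁻¹' Iic xstar) :=
      hcu_eq.trans_le (mul_le_mul_of_nonneg_left hhigh hsum)
    have := integral_nvLoss_add_le (y := xstar) hco.le hcu.le hD measurableSet_Iic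
      Iio_subset_Iic_self subset_rfl x
    linarith [mul_nonneg (sub_nonneg.2 hx) (sub_nonneg.2 hF)]
  · have hF : (co + cu) * μ.real (D ⁻¹' Iio xstar) ≤ cu :=
      (mul_le_mul_of_nonneg_left hlow hsum).trans_eq hcu_eq.symm
    have := integral_nvLoss_add_le (y := xstar) hco.le hcu.le hD measurableSet_Iio
      subset_rfl Iio_subset_Iic_self x
    linarith [mul_nonneg_of_nonpos_of_nonpos (sub_nonpos.2 hx) (sub_nonpos.2 hF)]

theorem quantile_maximizes_expected_nvProfit {Ω : Type*} [MeasurableSpace Ω]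
    (μ : Measure Ω) [IsProbabilityMeasure μ] (p v ch cs : ℝ)
    (hco : 0 < v + ch) (hcu : 0 < p - v + cs)
    (D : Ω → ℝ) (hDm : Measurable D) (hD : Integrable D μ)
    (τ : ℝ) (hτ : τ = (p - v + cs) / ((v + ch) + (p - v + cs)))
    (xstar : ℝ)
    (hlow : (μ {ω | D ω < xstar}).toReal ≤ τ)
    (hhigh : τ ≤ (μ {ω | D ω ≤ xstar}).toReal) :
    ∀ x : ℝ,
      (∫ ω, nvProfit p v ch cs x (D ω) ∂μ) ≤ ∫ ω, nvProfit p v ch cs xstar (D ω) ∂μ :=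
  quantile_maximizes_expected_nvProfit_general μ p v ch cs hco hcu D hD τ hτ xstar hlow hhigh
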